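/- The 7-vertex graph with vertex set {1,2,3,4,5,6,7} and edge set {{1,2},{2,3},{3,4},{4,5},{5,6},{6,1},{1,7},{4,7},{3,5}} (that is, a 6-cycle 1–2–3–4–5–6–1 together with a seventh vertex 7 adjacent to the antipodal vertices 1 and 4, and the chord {3,5}) is minimally unlabellable: it is not labellable, but every proper induced subgraph of it is labellable. -/

import Mathlib

/-!
Three labels pairwise meeting in `k - 1` points either share a common `(k - 1)`-set or lie in a
common `(k + 1)`-set, and complementing every label inside a common ground set exchanges the two
cases. So we may assume that the triangle `3, 4, 5` is labelled `S + p, S + q, S + r`. Each of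
`2, 7, 6` is adjacent to exactly one of these, which forces its label to be `S - x + p + y` (and
likewise for `q`, `r`) with a new point `y`. Vertex `1` is adjacent to `2, 7, 6` but not to
`3, 4, 5`; this forces it to contain `k - 2` points of `S` and all three new points, which are
distinct because `2, 7, 6` are pairwise non-adjacent: `k + 1` points in a `k`-set. Every
vertex-deleted subgraph carries an explicit labelling.
-/

/-- `H` is labellable: for some positive integer `k` the vertices of `H` can be
injectively labelled by `k`-element subsets of `ℕ` so that two distinct vertices
are adjacent if and only if their labels intersect in a set of size `k - 1`. -/
def Labellable {V : Type*} (H : SimpleGraph V) : Prop :=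
  ∃ k : ℕ, 0 < k ∧ ∃ ℓ : V → Finset ℕ, Function.Injective ℓ ∧
    (∀ v, (ℓ v).card = k) ∧
    ∀ u v : V, u ≠ v → (H.Adj u v ↔ (ℓ u ∩ ℓ v).card = k - 1)

/-- The 7-vertex graph with vertex set `{1,…,7}` (vertex `i` is encoded as
`i - 1 : Fin 7`) and edge set
`{{1,2},{2,3},{3,4},{4,5},{5,6},{6,1},{1,7},{4,7},{3,5}}`: a 6-cycle
`1-2-3-4-5-6-1` together with a seventh vertex `7` adjacent to the antipodal
vertices `1` and `4`, and the chord `{3,5}`. -/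
def sevenVertexGraph : SimpleGraph (Fin 7) :=
  SimpleGraph.fromRel (fun a b =>
    (a.val + 1, b.val + 1) ∈
      [(1, 2), (2, 3), (3, 4), (4, 5), (5, 6), (6, 1), (1, 7), (4, 7), (3, 5)])

instance : DecidableRel sevenVertexGraph.Adj := fun _ _ =>
  decidable_of_iff' _ (SimpleGraph.fromRel_adj _ _ _)

open Finset

variable {α V V' : Type*}

def IsLabelling (H : SimpleGraph V) (k : ℕ) (ℓ : V → Finset ℕ) : Prop :=
  Function.Injective ℓ ∧ (∀ v, #(ℓ v) = k) ∧
    ∀ u v : V, u ≠ v → (H.Adj u v ↔ #(ℓ u ∩ ℓ v) = k - 1)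

namespace IsLabelling

variable {H : SimpleGraph V} {k : ℕ} {ℓ : V → Finset ℕ} {u v : V}

theorem card (h : IsLabelling H k ℓ) (v : V) : #(ℓ v) = k := h.2.1 v

theorem card_inter_lt (h : IsLabelling H k ℓ) (huv : u ≠ v) : #(ℓ u ∩ ℓ v) < k := by
  by_contra! hk
  have hu : ℓ u ⊆ ℓ v :=
    inter_eq_left.1 (eq_of_subset_of_card_le inter_subset_left (by rwa [h.card]))
  exact huv (h.1 (eq_of_subset_of_card_le hu (by rw [h.card, h.card])))

theorem card_inter_add_one_of_adj (h : IsLabelling H k ℓ) (huv : H.Adj u v) :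
    #(ℓ u ∩ ℓ v) + 1 = k := by
  have := (h.2.2 u v huv.ne).1 huv
  have := h.card_inter_lt huv.ne
  omega

theorem card_inter_add_two_le (h : IsLabelling H k ℓ) (huv : u ≠ v) (hadj : ¬ H.Adj u v) :
    #(ℓ u ∩ ℓ v) + 2 ≤ k := by
  have := mt (h.2.2 u v huv).2 hadj
  have := h.card_inter_lt huv
  omega

theorem compl (h : IsLabelling H k ℓ) {N : Finset ℕ} (hN : ∀ v, ℓ v ⊆ N) :
    IsLabelling H (#N - k) (fun v => N \ ℓ v) := by
  refine ⟨fun u v huv => ?_, fun v => by rw [card_sdiff_of_subset (hN v), h.card],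
    fun u v huv => ?_⟩
  · apply h.1
    rw [← Finset.sdiff_sdiff_eq_self (hN u), ← Finset.sdiff_sdiff_eq_self (hN v)]
    exact congrArg (N \ ·) huv
  · have hU := union_subset (hN u) (hN v)
    rw [← sdiff_union_distrib, card_sdiff_of_subset hU, h.2.2 u v huv]
    have := card_union_add_card_inter (ℓ u) (ℓ v)
    have := card_le_card hU
    have := h.card_inter_lt huv
    rw [h.card, h.card] at *
    omega

end IsLabelling

theorem Labellable.of_embedding {H : SimpleGraph V} {H' : SimpleGraph V'} (f : H' ↪g H)
    (h : Labellable H) : Labellable H' := by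
  obtain ⟨k, hk, ℓ, hinj, hcard, hadj⟩ := h
  refine ⟨k, hk, ℓ ∘ f, hinj.comp f.injective, fun v => hcard (f v), fun u v huv => ?_⟩
  simpa using hadj (f u) (f v) (f.injective.ne huv)

theorem labellable_induce {H : SimpleGraph V} {s : Set V} {k : ℕ} (hk : 0 < k)
    (ℓ : V → Finset ℕ) (hℓ : ∀ u ∈ s, ∀ v ∈ s,
      #(ℓ u) = k ∧ (u ≠ v → ℓ u ≠ ℓ v ∧ (H.Adj u v ↔ #(ℓ u ∩ ℓ v) = k - 1))) :
    Labellable (H.induce s) := by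
  refine ⟨k, hk, fun v => ℓ v, fun u v huv => ?_, fun v => (hℓ v v.2 v v.2).1,
    fun u v huv => (hℓ u u.2 v v.2).2 (Subtype.coe_ne_coe.2 huv) |>.2⟩
  by_contra hne
  exact (hℓ u u.2 v v.2).2 (Subtype.coe_ne_coe.2 hne) |>.1 huv

section Sunflower

variable [DecidableEq α] {S W Z : Finset α} {k : ℕ}

theorem card_inter_inter_add_one_or_card_union_union {A B C : Finset α} (hA : #A = k)
    (hB : #B = k) (hC : #C = k) (hAB : #(A ∩ B) + 1 = k) (hAC : #(A ∩ C) + 1 = k)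
    (hBC : #(B ∩ C) + 1 = k) :
    #(A ∩ B ∩ C) + 1 = k ∨ #(A ∪ B ∪ C) = k + 1 := by
  have h₁ := card_union_add_card_inter (A ∩ B) (A ∩ C)
  have h₂ := card_union_add_card_inter (A ∩ C) (B ∩ C)
  have h₃ := card_union_add_card_inter (A ∪ B) C
  have h₄ := card_union_add_card_inter A B
  have h₅ := card_le_card
    (union_subset (inter_subset_left : A ∩ B ⊆ A) (inter_subset_left : A ∩ C ⊆ A))
  have h₆ := card_le_card (inter_subset_left : A ∩ B ∩ C ⊆ A ∩ B)
  rw [← inter_inter_distrib_left, ← inter_inter_distrib_right, ← inter_assoc] at *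
  rw [union_inter_distrib_right] at h₃
  omega

theorem exists_eq_insert_of_card_inter_inter {A B C : Finset α} (hA : #A = k) (hB : #B = k)
    (hC : #C = k) (h : #(A ∩ B ∩ C) + 1 = k) :
    ∃ S, ∃ a ∉ S, ∃ b ∉ S, ∃ c ∉ S, A = insert a S ∧ B = insert b S ∧ C = insert c S := by
  have core {X : Finset α} (hX : #X = k) (hsub : A ∩ B ∩ C ⊆ X) :
      ∃ x ∉ A ∩ B ∩ C, insert x (A ∩ B ∩ C) = X :=
    exists_eq_insert_iff.2 ⟨hsub, by omega⟩
  obtain ⟨a, ha, hA⟩ := core hA (inter_subset_left.trans inter_subset_left)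
  obtain ⟨b, hb, hB⟩ := core hB (inter_subset_left.trans inter_subset_right)
  obtain ⟨c, hc, hC⟩ := core hC inter_subset_right
  exact ⟨_, a, ha, b, hb, c, hc, hA.symm, hB.symm, hC.symm⟩

theorem card_inter_insert {a : α} (W : Finset α) (ha : a ∉ S) :
    #(W ∩ insert a S) = #(W ∩ S) + if a ∈ W then 1 else 0 := by
  split_ifs with h
  · rw [inter_insert_of_mem h, card_insert_of_notMem (fun h' => ha (mem_inter.1 h').2)]
  · rw [inter_insert_of_notMem h, add_zero]

theorem mem_and_not_mem_of_card_inter_insert {p q : α} (hp : p ∉ S) (hq : q ∉ S)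
    (hWp : #(W ∩ insert p S) + 1 = k) (hWq : #(W ∩ insert q S) + 2 ≤ k) :
    p ∈ W ∧ q ∉ W := by
  rw [card_inter_insert W hp] at hWp
  rw [card_inter_insert W hq] at hWq
  split_ifs at hWp hWq with hpW hqW <;> first | exact ⟨hpW, hqW⟩ | omega

theorem exists_mem_sdiff_of_card_inter {P : Finset α} (hW : #W = k)
    (hWP : #(W ∩ P) + 1 = k) (hZW : #(Z ∩ W) + 1 = k) (hZP : #(Z ∩ P) + 2 ≤ k) :
    ∃ y ∈ W \ P, y ∈ Z ∧ Z ∩ P ⊆ W ∧ #(Z ∩ P) + 2 = k := by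
  obtain ⟨y, hy⟩ : ∃ y, W \ P = {y} := card_eq_one.1 (by
    have := card_sdiff_add_card_inter W P
    omega)
  have hsub : Z ∩ W ⊆ insert y (Z ∩ P ∩ W) := by
    intro x hx
    obtain ⟨hxZ, hxW⟩ := mem_inter.1 hx
    by_cases hxP : x ∈ P
    · exact mem_insert_of_mem (mem_inter.2 ⟨mem_inter.2 ⟨hxZ, hxP⟩, hxW⟩)
    · have : x ∈ W \ P := mem_sdiff.2 ⟨hxW, hxP⟩
      rw [hy, mem_singleton] at this
      exact this ▸ mem_insert_self _ _
  have h₁ := (card_le_card hsub).trans (card_insert_le _ _)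
  have h₂ := card_le_card (inter_subset_left : Z ∩ P ∩ W ⊆ Z ∩ P)
  refine ⟨y, by simp [hy], ?_, ?_, by omega⟩
  · by_contra hyZ
    have := card_le_card ((subset_insert_iff_of_notMem fun h => hyZ (mem_inter.1 h).1).1 hsub)
    omega
  · rw [← eq_of_subset_of_card_le (inter_subset_left : Z ∩ P ∩ W ⊆ Z ∩ P) (by omega)]
    exact inter_subset_right

theorem card_inter_add_card_le {T : Finset α} (hT : T ⊆ Z) (hST : Disjoint S T) :
    #(Z ∩ S) + #T ≤ #Z := by
  rw [← card_union_of_disjoint (disjoint_of_subset_left inter_subset_right hST)]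
  exact card_le_card (union_subset inter_subset_left hT)

theorem card_inter_add_two_eq {p q r y : α} (hp : p ∉ S) (hq : q ∉ S) (hr : r ∉ S)
    (hpq : p ≠ q) (hpr : p ≠ r) (hqr : q ≠ r) (hyS : y ∉ S) (hyp : y ≠ p) (hyq : y ≠ q)
    (hyr : y ≠ r) (hyZ : y ∈ Z) (hZ : #Z = k) (hZp : #(Z ∩ insert p S) + 2 = k)
    (hZq : #(Z ∩ insert q S) + 2 = k) (hZr : #(Z ∩ insert r S) + 2 = k) :
    #(Z ∩ S) + 2 = k := by
  rw [card_inter_insert Z hp] at hZp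
  rw [card_inter_insert Z hq] at hZq
  rw [card_inter_insert Z hr] at hZr
  by_cases hpZ : p ∈ Z
  · have hqZ : q ∈ Z := by by_contra h; simp only [hpZ, h, if_true, if_false] at hZp hZq; omega
    have hrZ : r ∈ Z := by by_contra h; simp only [hpZ, h, if_true, if_false] at hZp hZr; omega
    have := card_inter_add_card_le (S := S) (Z := Z) (T := {p, q, r, y})
      (by simp [insert_subset_iff, hpZ, hqZ, hrZ, hyZ]) (by simp [hp, hq, hr, hyS])
    rw [card_insert_of_notMem (by simp [hpq, hpr, hyp.symm]),
      card_insert_of_notMem (by simp [hqr, hyq.symm]), card_pair hyr.symm] at this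
    simp only [hpZ, if_true] at hZp
    omega
  · simpa [hpZ] using hZp

theorem ne_of_card_inter_add_two_le {W' : Finset α} {y y' : α} (hZS : #(Z ∩ S) + 2 = k)
    (hW : Z ∩ S ⊆ W) (hW' : Z ∩ S ⊆ W') (hWW' : #(W ∩ W') + 2 ≤ k) (hy : y ∈ W)
    (hy' : y' ∈ W') (hyS : y ∉ S) : y ≠ y' := by
  rintro rfl
  have := card_le_card (insert_subset (mem_inter.2 ⟨hy, hy'⟩) (subset_inter hW hW'))
  rw [card_insert_of_notMem (fun h => hyS (mem_inter.1 h).2)] at this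
  omega

end Sunflower

theorem not_isLabelling_sevenVertexGraph_of_card_inter_inter {k : ℕ} {ℓ : Fin 7 → Finset ℕ}
    (hcore : #(ℓ 2 ∩ ℓ 3 ∩ ℓ 4) + 1 = k) : ¬ IsLabelling sevenVertexGraph k ℓ := by
  intro hℓ
  have adj (u v : Fin 7) (h : sevenVertexGraph.Adj u v := by decide) :=
    hℓ.card_inter_add_one_of_adj h
  have nadj (u v : Fin 7) (h : u ≠ v ∧ ¬ sevenVertexGraph.Adj u v := by decide) :=
    hℓ.card_inter_add_two_le h.1 h.2
  obtain ⟨S, p, hp, q, hq, r, hr, hP, hQ, hR⟩ :=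
    exists_eq_insert_of_card_inter_inter (hℓ.card 2) (hℓ.card 3) (hℓ.card 4) hcore
  obtain ⟨hpW₁, hqW₁⟩ :=
    mem_and_not_mem_of_card_inter_insert hp hq (hP ▸ adj 1 2) (hQ ▸ nadj 1 3)
  obtain ⟨-, hrW₁⟩ := mem_and_not_mem_of_card_inter_insert hp hr (hP ▸ adj 1 2) (hR ▸ nadj 1 4)
  obtain ⟨hqW₂, hrW₂⟩ :=
    mem_and_not_mem_of_card_inter_insert hq hr (hQ ▸ adj 6 3) (hR ▸ nadj 6 4)
  obtain ⟨y₁, hy₁, hy₁Z, hZW₁, hZP⟩ := exists_mem_sdiff_of_card_inter (hℓ.card 1)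
    (hP ▸ adj 1 2) (adj 0 1) (hP ▸ nadj 0 2)
  obtain ⟨y₂, hy₂, hy₂Z, hZW₂, hZQ⟩ := exists_mem_sdiff_of_card_inter (hℓ.card 6)
    (hQ ▸ adj 6 3) (adj 0 6) (hQ ▸ nadj 0 3)
  obtain ⟨y₃, hy₃, hy₃Z, hZW₃, hZR⟩ := exists_mem_sdiff_of_card_inter (hℓ.card 5)
    (hR ▸ adj 5 4) (adj 0 5) (hR ▸ nadj 0 4)
  simp only [mem_sdiff, mem_insert, not_or] at hy₁ hy₂ hy₃
  obtain ⟨hy₁W, hy₁p, hy₁S⟩ := hy₁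
  obtain ⟨hy₂W, -, hy₂S⟩ := hy₂
  obtain ⟨hy₃W, -, hy₃S⟩ := hy₃
  have hZS : #(ℓ 0 ∩ S) + 2 = k := card_inter_add_two_eq hp hq hr
    (ne_of_mem_of_not_mem hpW₁ hqW₁) (ne_of_mem_of_not_mem hpW₁ hrW₁)
    (ne_of_mem_of_not_mem hqW₂ hrW₂) hy₁S hy₁p (ne_of_mem_of_not_mem hy₁W hqW₁)
    (ne_of_mem_of_not_mem hy₁W hrW₁) hy₁Z (hℓ.card 0) hZP hZQ hZR
  have hZSW {W : Finset ℕ} {a : ℕ} (h : ℓ 0 ∩ insert a S ⊆ W) : ℓ 0 ∩ S ⊆ W :=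
    (inter_subset_inter_left (subset_insert a S)).trans h
  have h₁₂ := ne_of_card_inter_add_two_le hZS (hZSW hZW₁) (hZSW hZW₂) (nadj 1 6) hy₁W hy₂W hy₁S
  have h₁₃ := ne_of_card_inter_add_two_le hZS (hZSW hZW₁) (hZSW hZW₃) (nadj 1 5) hy₁W hy₃W hy₁S
  have h₂₃ := ne_of_card_inter_add_two_le hZS (hZSW hZW₂) (hZSW hZW₃) (nadj 6 5) hy₂W hy₃W hy₂S
  have := card_inter_add_card_le (S := S) (Z := ℓ 0) (T := {y₁, y₂, y₃})
    (by simp [insert_subset_iff, hy₁Z, hy₂Z, hy₃Z]) (by simp [hy₁S, hy₂S, hy₃S])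
  rw [card_eq_three.2 ⟨y₁, y₂, y₃, h₁₂, h₁₃, h₂₃, rfl⟩, hℓ.card] at this
  omega

theorem not_labellable_sevenVertexGraph : ¬ Labellable sevenVertexGraph := by
  rintro ⟨k, -, ℓ, (hℓ : IsLabelling _ k ℓ)⟩
  have adj (u v : Fin 7) (h : sevenVertexGraph.Adj u v := by decide) :=
    hℓ.card_inter_add_one_of_adj h
  rcases card_inter_inter_add_one_or_card_union_union (hℓ.card 2) (hℓ.card 3) (hℓ.card 4)
    (adj 2 3) (adj 2 4) (adj 3 4) with hcore | hunion
  · exact not_isLabelling_sevenVertexGraph_of_card_inter_inter hcore hℓ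
  · have hN (v : Fin 7) : ℓ v ⊆ univ.biUnion ℓ := subset_biUnion_of_mem ℓ (mem_univ v)
    refine not_isLabelling_sevenVertexGraph_of_card_inter_inter ?_ (hℓ.compl hN)
    have hsub := union_subset (union_subset (hN 2) (hN 3)) (hN 4)
    have := card_le_card hsub
    rw [← sdiff_union_distrib, ← sdiff_union_distrib, card_sdiff_of_subset hsub, hunion]
    omega

/-- This 7-vertex graph is minimally unlabellable: it is not labellable, but
every proper induced subgraph of it is labellable. -/
theorem sevenVertexGraph_minimally_unlabellable :
    ¬ Labellable sevenVertexGraph ∧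
      ∀ s : Set (Fin 7), s ≠ Set.univ →
        Labellable (sevenVertexGraph.induce s) := by
  refine ⟨not_labellable_sevenVertexGraph, fun s hs => ?_⟩
  obtain ⟨v₀, hv₀⟩ := (Set.ne_univ_iff_exists_notMem s).1 hs
  refine Labellable.of_embedding
    (SimpleGraph.induceHomOfLE _ (Set.subset_compl_singleton_iff.2 hv₀)) ?_
  fin_cases v₀
  · exact labellable_induce two_pos
      ![∅, {0, 1}, {0, 2}, {2, 3}, {2, 4}, {4, 5}, {3, 6}] (by decide)
  · exact labellable_induce two_pos
      ![{0, 1}, ∅, {2, 3}, {2, 4}, {2, 5}, {0, 5}, {1, 4}] (by decide)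
  · exact labellable_induce three_pos
      ![{0, 1, 2}, {0, 1, 3}, ∅, {0, 4, 5}, {1, 4, 5}, {1, 2, 4}, {0, 2, 5}] (by decide)
  · exact labellable_induce three_pos
      ![{0, 1, 2}, {0, 1, 3}, {0, 3, 4}, ∅, {0, 4, 5}, {0, 2, 5}, {1, 2, 4}] (by decide)
  · exact labellable_induce three_pos
      ![{0, 1, 2}, {0, 1, 3}, {0, 3, 4}, {0, 4, 5}, ∅, {1, 2, 4}, {0, 2, 5}] (by decide)
  · exact labellable_induce two_pos
      ![{0, 1}, {0, 2}, {2, 3}, {3, 4}, {3, 5}, ∅, {1, 4}] (by decide)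
  · exact labellable_induce two_pos
      ![{0, 1}, {0, 2}, {2, 3}, {3, 4}, {3, 5}, {1, 5}, ∅] (by decide)
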